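/- Lagrange Inversion: if R and Φ are formal power series over a field of characteristic 0 with R having zero constant term and Φ having nonzero constant term, and R(x) = x·Φ(R(x)), then for all n ≥ 1, the coefficient of x^n in R equals (1/n) times the coefficient of z^(n-1) in Φ(z)^n. -/

import Mathlib

/-! Put `U = Φ(R)`, so that `R = X·U` with `U` invertible and `U^n = Φ^n(R)`. Then
`n·[x^n] R = [x^(n-1)] R' = [x^(n-1)] R'·U⁻ⁿ·Φ^n(R) = ∑ₖ [z^k] Φ^n · [x^(n-1)] R'·U⁻ⁿ·R^k`,
and `[x^(n-1)] R'·U⁻ⁿ·R^k = [x^(n-1-k)] R'·U^(-(n-k))` is the residue of `R'/R^(n-k)`: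
it is `1` for `k = n-1` and `0` otherwise, since `R'/R^(m+1)` is a derivative for `m ≥ 1`. -/

/-- Composition `Φ(R)` of formal power series, valid when `R` has zero constant term. -/
noncomputable def psComp {K : Type*} [CommRing K] (Φ R : PowerSeries K) : PowerSeries K :=
  PowerSeries.mk fun m => ∑ k ∈ Finset.range (m + 1),
    (PowerSeries.coeff k Φ) * PowerSeries.coeff m (R ^ k)

open PowerSeries Finset

section CommRing

variable {A : Type*} [CommRing A] {R : PowerSeries A}

theorem coeff_psComp (Φ R : PowerSeries A) (m : ℕ) :
    coeff m (psComp Φ R) = ∑ k ∈ range (m + 1), coeff k Φ * coeff m (R ^ k) :=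
  coeff_mk _ _

theorem coeff_pow_eq_zero_of_lt (hR : constantCoeff R = 0) {m k : ℕ} (h : m < k) :
    coeff m (R ^ k) = 0 :=
  coeff_of_lt_order m <| (Nat.cast_lt.mpr h).trans_le (le_order_pow_of_constantCoeff_eq_zero k hR)

theorem constantCoeff_psComp (Φ R : PowerSeries A) :
    constantCoeff (psComp Φ R) = constantCoeff Φ := by
  rw [← coeff_zero_eq_constantCoeff_apply, coeff_psComp]
  simp

theorem psComp_eq_subst (hR : constantCoeff R = 0) (Φ : PowerSeries A) :
    psComp Φ R = Φ.subst R := by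
  ext m
  rw [coeff_psComp, coeff_subst' (HasSubst.of_constantCoeff_zero' hR)]
  refine (finsum_eq_sum_of_support_subset _ fun k hk => ?_).symm
  by_contra! hkm
  rw [coe_range, Set.mem_Iio, not_lt, Nat.add_one_le_iff] at hkm
  exact hk (by simp [coeff_pow_eq_zero_of_lt hR hkm])

theorem psComp_pow (hR : constantCoeff R = 0) (Φ : PowerSeries A) (n : ℕ) :
    psComp Φ R ^ n = psComp (Φ ^ n) R := by
  rw [psComp_eq_subst hR, psComp_eq_subst hR, subst_pow (HasSubst.of_constantCoeff_zero' hR)]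

theorem coeff_mul_psComp (hR : constantCoeff R = 0) (F Ψ : PowerSeries A) (N : ℕ) :
    coeff N (F * psComp Ψ R) = ∑ k ∈ range (N + 1), coeff k Ψ * coeff N (F * R ^ k) := by
  have extend : ∀ b ≤ N, ∑ k ∈ range (b + 1), coeff k Ψ * coeff b (R ^ k) =
      ∑ k ∈ range (N + 1), coeff k Ψ * coeff b (R ^ k) := fun b hb =>
    sum_subset (range_subset_range.mpr (by omega)) fun k _ hk => by
      rw [coeff_pow_eq_zero_of_lt hR (by simpa using hk), mul_zero]
  simp only [coeff_mul, mul_sum]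
  rw [sum_comm]
  refine sum_congr rfl fun p hp => ?_
  rw [coeff_psComp, extend p.2 (by have := mem_antidiagonal.mp hp; omega), mul_sum]
  exact sum_congr rfl fun k _ => by ring

end CommRing

section Field

variable {K : Type*} [Field K] [CharZero K] {U : PowerSeries K}

theorem coeff_derivative_X_mul_mul_inv_pow (hU : constantCoeff U ≠ 0) (m : ℕ) :
    coeff m (d⁄dX K (X * U) * U⁻¹ ^ (m + 1)) = if m = 0 then 1 else 0 := by
  have hUinv : U * U⁻¹ = 1 := PowerSeries.mul_inv_cancel U hU
  have split : d⁄dX K (X * U) * U⁻¹ ^ (m + 1) =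
      X * (d⁄dX K U * U⁻¹ ^ (m + 1)) + U⁻¹ ^ m := by
    rw [Derivation.leibniz, derivative_X, smul_eq_mul, smul_eq_mul]
    linear_combination U⁻¹ ^ m * hUinv
  rw [split, map_add]
  cases m with
  | zero => simp
  | succ p =>
    -- `(U⁻¹ ^ (p+1))' = -(p+1)·U'·U⁻¹^(p+2)`, and `[x^(p+1)]` of `X·f'` is `(p+1)·[x^(p+1)] f`
    have hderiv : d⁄dX K (U⁻¹ ^ (p + 1)) = -((p + 1) • (d⁄dX K U * U⁻¹ ^ (p + 2))) := by
      rw [derivative_pow, derivative_inv', nsmul_eq_mul]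
      push_cast
      ring
    have hcoeff := congrArg (coeff p) hderiv
    rw [coeff_derivative, map_neg, map_nsmul, nsmul_eq_mul] at hcoeff
    rw [coeff_succ_X_mul, if_neg p.succ_ne_zero]
    have hp : (p : K) + 1 ≠ 0 := Nat.cast_add_one_ne_zero p
    apply mul_left_cancel₀ hp
    push_cast at hcoeff ⊢
    linear_combination hcoeff

theorem coeff_derivative_mul_inv_pow_mul_pow {R : PowerSeries K} (hU : constantCoeff U ≠ 0)
    (hR : R = X * U) {k N : ℕ} (hk : k ≤ N) :
    coeff N (d⁄dX K R * U⁻¹ ^ (N + 1) * R ^ k) = if k = N then 1 else 0 := by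
  subst hR
  obtain ⟨j, rfl⟩ := Nat.exists_eq_add_of_le hk
  have cancel : d⁄dX K (X * U) * U⁻¹ ^ (k + j + 1) * (X * U) ^ k =
      X ^ k * (d⁄dX K (X * U) * U⁻¹ ^ (j + 1)) := by
    have hUk : U⁻¹ ^ k * U ^ k = 1 := by rw [← mul_pow, PowerSeries.inv_mul_cancel U hU, one_pow]
    rw [mul_pow, show k + j + 1 = (j + 1) + k by omega, pow_add]
    linear_combination X ^ k * d⁄dX K (X * U) * U⁻¹ ^ (j + 1) * hUk
  rw [cancel, add_comm, coeff_X_pow_mul, coeff_derivative_X_mul_mul_inv_pow hU]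
  simp

end Field

/-- Lagrange Inversion: over a field of characteristic 0, if `R(0) = 0`, `Φ(0) ≠ 0`
and `R = x·Φ(R(x))`, then for all `n ≥ 1`, `[x^n] R = (1/n)·[z^(n-1)] Φ^n`. -/
theorem lagrange_inversion {K : Type*} [Field K] [CharZero K]
    (R Φ : PowerSeries K)
    (hR0 : PowerSeries.constantCoeff R = 0)
    (hΦ0 : PowerSeries.constantCoeff Φ ≠ 0)
    (hfe : R = PowerSeries.X * psComp Φ R)
    (n : ℕ) (hn : 1 ≤ n) :
    PowerSeries.coeff n R = (1 / (n : K)) * PowerSeries.coeff (n - 1) (Φ ^ n) := by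
  obtain ⟨N, rfl⟩ : ∃ N, n = N + 1 := ⟨n - 1, by omega⟩
  set U := psComp Φ R
  have hU : constantCoeff U ≠ 0 := by rwa [constantCoeff_psComp]
  have key : coeff (N + 1) R * (N + 1) = coeff N (Φ ^ (N + 1)) := calc
    coeff (N + 1) R * (N + 1) = coeff N (d⁄dX K R) := (coeff_derivative _ _).symm
    _ = coeff N (d⁄dX K R * U⁻¹ ^ (N + 1) * psComp (Φ ^ (N + 1)) R) := by
      rw [← psComp_pow hR0, mul_assoc, ← mul_pow, PowerSeries.inv_mul_cancel U hU, one_pow,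
        mul_one]
    _ = ∑ k ∈ range (N + 1), coeff k (Φ ^ (N + 1)) * coeff N (d⁄dX K R * U⁻¹ ^ (N + 1) * R ^ k) :=
      coeff_mul_psComp hR0 _ _ _
    _ = ∑ k ∈ range (N + 1), coeff k (Φ ^ (N + 1)) * if k = N then 1 else 0 :=
      sum_congr rfl fun k hk => by
        rw [coeff_derivative_mul_inv_pow_mul_pow hU hfe (mem_range_succ_iff.mp hk)]
    _ = coeff N (Φ ^ (N + 1)) := by simp
  rw [Nat.add_sub_cancel, ← key]
  push_cast
  field_simp
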